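/- arXiv:math/9912017 — 6 statements merged into one kernel-verified Lean document; each statement's English description precedes it below -/
import Mathlib

section
/- Let A be a Poisson algebra, i.e., a unital associative complex algebra with a Lie bracket {·,·} that is a biderivation for the associative product. Then for all a, b, c, d ∈ A one has [a,b]{c,d} = {a,b}[c,d], where [x,y] = xy − yx is the commutator. -/
/-- In a Poisson algebra, [a,b]{c,d} = {a,b}[c,d]. -/
theorem stmt_3 (A : Type) [Ring A] [Algebra ℂ A]
    (P : A →ₗ[ℂ] A →ₗ[ℂ] A)
    (hanti : ∀ a b : A, P a b = - P b a)
    (hjac : ∀ a b c : A, P (P a b) c + P (P b c) a + P (P c a) b = 0)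
    (hleib : ∀ a b c : A, P a (b * c) = P a b * c + b * P a c) :
    ∀ a b c d : A, (a * b - b * a) * P c d = P a b * (c * d - d * c) := by
  have h1 : ∀ x y z : A, P (x * y) z = P x z * y + x * P y z := by
    intro x y z
    rw [hanti (x * y) z, hleib, hanti z x, hanti z y]
    noncomm_ring
  have key : ∀ a b c d : A, P a c * (b * d - d * b) = (a * c - c * a) * P b d := by
    intro a b c d
    have e : (P a c * b + a * P b c) * d + c * (P a d * b + a * P b d)
        = (P a c * d + c * P a d) * b + a * (P b c * d + c * P b d) := by
      calc (P a c * b + a * P b c) * d + c * (P a d * b + a * P b d)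
          = P (a * b) c * d + c * P (a * b) d := by rw [h1, h1]
        _ = P (a * b) (c * d) := (hleib _ _ _).symm
        _ = P a (c * d) * b + a * P b (c * d) := h1 a b (c * d)
        _ = (P a c * d + c * P a d) * b + a * (P b c * d + c * P b d) := by
            rw [hleib, hleib]
    linear_combination (norm := noncomm_ring) e
  intro a b c d
  exact (key a c b d).symm
end

section
/- Let A be a Poisson algebra. Then for all a, b, c, d, x ∈ A one has [a,b] x {c,d} = {a,b} x [c,d], where [u,v] = uv − vu. -/
/-- In a Poisson algebra, [a,b] x {c,d} = {a,b} x [c,d] for all x. -/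
theorem stmt_4 (A : Type) [Ring A] [Algebra ℂ A]
    (P : A →ₗ[ℂ] A →ₗ[ℂ] A)
    (hanti : ∀ a b : A, P a b = - P b a)
    (hjac : ∀ a b c : A, P (P a b) c + P (P b c) a + P (P c a) b = 0)
    (hleib : ∀ a b c : A, P a (b * c) = P a b * c + b * P a c) :
    ∀ a b c d x : A, (a * b - b * a) * x * P c d = P a b * x * (c * d - d * c) := by
  -- derivation in the first slot
  have fst : ∀ u v w : A, P (u * v) w = P u w * v + u * P v w := by
    intro u v w
    rw [hanti (u * v) w, hleib, hanti w u, hanti w v]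
    noncomm_ring
  -- base identity (x = 1 case)
  have key : ∀ a b c d : A, (a * b - b * a) * P c d = P a b * (c * d - d * c) := by
    intro a b c d
    have h : (P a b * c + a * P c b) * d + b * (P a d * c + a * P c d)
        = (P a b * d + b * P a d) * c + a * (P c b * d + b * P c d) := by
      calc (P a b * c + a * P c b) * d + b * (P a d * c + a * P c d)
          = P (a * c) b * d + b * P (a * c) d := by rw [fst, fst]
        _ = P (a * c) (b * d) := (hleib _ _ _).symm
        _ = P a (b * d) * c + a * P c (b * d) := fst _ _ _
        _ = (P a b * d + b * P a d) * c + a * (P c b * d + b * P c d) := by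
            rw [hleib, hleib]
    linear_combination (norm := noncomm_ring) -h
  intro a b c d x
  have h1 := key a (b * x) c d
  rw [hleib] at h1
  have h2 := key a x c d
  linear_combination (norm := noncomm_ring) h1 - b * h2
end

section
/- Let A be a unital associative complex algebra and M an (A,A)-bimodule. Then the canonical evaluation homomorphism c : M → M^{*_A *_A} into the A-bidual is injective if and only if M is isomorphic as a bimodule to a subbimodule of A^I for some index set I. -/
open MulOpposite

/-- A bimodule homomorphism from an (A,A)-bimodule M to A. -/
structure BimoduleHom (A M : Type) [Ring A] [AddCommGroup M]
    [Module A M] [Module Aᵐᵒᵖ M] where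
  toFun : M → A
  map_add' : ∀ m n : M, toFun (m + n) = toFun m + toFun n
  map_left' : ∀ (a : A) (m : M), toFun (a • m) = a * toFun m
  map_right' : ∀ (a : A) (m : M), toFun (op a • m) = toFun m * a

/-- the canonical evaluation of M into its A-bidual is injective iff
M is isomorphic to a subbimodule of A^I for some set I (i.e. there is an injective
bimodule homomorphism M → A^I). -/
theorem stmt_14 (A : Type) [Ring A] [Algebra ℂ A]
    (M : Type) [AddCommGroup M] [Module A M] [Module Aᵐᵒᵖ M] [SMulCommClass A Aᵐᵒᵖ M] :
    Function.Injective (fun (m : M) => fun f : BimoduleHom A M => f.toFun m) ↔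
    ∃ (I : Type) (u : M → I → A), Function.Injective u ∧
      (∀ m n : M, u (m + n) = u m + u n) ∧
      (∀ (a : A) (m : M), u (a • m) = fun i => a * u m i) ∧
      (∀ (a : A) (m : M), u (op a • m) = fun i => u m i * a) := by
  constructor
  · intro h
    refine ⟨BimoduleHom A M, fun m f => f.toFun m, h, ?_, ?_, ?_⟩
    · intro m n; funext f; exact f.map_add' m n
    · intro a m; funext f; exact f.map_left' a m
    · intro a m; funext f; exact f.map_right' a m
  · rintro ⟨I, u, hu, hadd, hl, hr⟩
    intro m n hmn
    apply hu
    funext i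
    have := congrFun hmn ⟨fun m => u m i,
      fun m n => congrFun (hadd m n) i,
      fun a m => congrFun (hl a m) i,
      fun a m => congrFun (hr a m) i⟩
    exact this
end

section
/- Let A be a unital associative complex algebra and ω a symplectic structure for A, i.e., a closed nondegenerate element of Ω̲²_Der(A). Define {x,y} = ω(Ham(x), Ham(y)), where Ham(x) is the unique derivation with ω(X, Ham(x)) = X(x) for all X ∈ Der(A). Then {·,·} is a Poisson bracket on A, i.e., it is antisymmetric, satisfies the Jacobi identity, and is a derivation in each argument. -/
noncomputable section

/-- The Lie algebra Der(A) of derivations of A into itself. -/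
def DerA (A : Type) [Ring A] [Algebra ℂ A] :=
  {X : A →ₗ[ℂ] A // ∀ a b : A, X (a * b) = X a * b + a * X b}

/-- The commutator [X,Y] = X∘Y - Y∘X of two derivations. -/
def derComm {A : Type} [Ring A] [Algebra ℂ A] (X Y : DerA A) : DerA A :=
  ⟨X.1 ∘ₗ Y.1 - Y.1 ∘ₗ X.1, by
    intro a b
    simp only [LinearMap.sub_apply, LinearMap.comp_apply, X.2, Y.2, map_add,
      mul_add, add_mul, sub_mul, mul_sub]
    abel⟩

/-- The sum of two derivations. -/
def derAdd {A : Type} [Ring A] [Algebra ℂ A] (X Y : DerA A) : DerA A :=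
  ⟨X.1 + Y.1, by
    intro a b
    simp only [LinearMap.add_apply, X.2, Y.2, add_mul, mul_add]
    abel⟩

/-- a symplectic structure ω for A (a closed nondegenerate
antisymmetric Z(A)-bilinear 2-form on Der(A)) yields a Poisson bracket
{x,y} = ω(Ham x, Ham y): antisymmetric, Jacobi, and a derivation in each argument. -/
theorem stmt_16 (A : Type) [Ring A] [Algebra ℂ A]
    (ω : DerA A → DerA A → A)
    (hanti : ∀ X Y : DerA A, ω X Y = - ω Y X)
    (haddl : ∀ X Y Z : DerA A, ω (derAdd X Y) Z = ω X Z + ω Y Z)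
    (hclosed : ∀ X Y Z : DerA A,
      X.1 (ω Y Z) - Y.1 (ω X Z) + Z.1 (ω X Y)
        - ω (derComm X Y) Z + ω (derComm X Z) Y - ω (derComm Y Z) X = 0)
    (Ham : A → DerA A)
    (hHam : ∀ (x : A) (X : DerA A), ω X (Ham x) = X.1 x) :
    (∀ x y : A, ω (Ham x) (Ham y) = - ω (Ham y) (Ham x)) ∧
    (∀ x y z : A,
      ω (Ham (ω (Ham x) (Ham y))) (Ham z)
        + ω (Ham (ω (Ham y) (Ham z))) (Ham x)
        + ω (Ham (ω (Ham z) (Ham x))) (Ham y) = 0) ∧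
    (∀ x y z : A,
      ω (Ham x) (Ham (y * z)) = ω (Ham x) (Ham y) * z + y * ω (Ham x) (Ham z)) := by
  have hb : ∀ a b : A, ω (Ham a) (Ham b) = (Ham a).1 b := fun a b => hHam b (Ham a)
  have hflip : ∀ a b : A, (Ham a).1 b = -((Ham b).1 a) := by
    intro a b
    rw [← hb a b, ← hb b a]
    exact hanti _ _
  have hcomm : ∀ (P Q : DerA A) (c : A),
      ω (derComm P Q) (Ham c) = P.1 (Q.1 c) - Q.1 (P.1 c) := by
    intro P Q c
    rw [hHam]
    rfl
  refine ⟨fun x y => hanti _ _, fun x y z => ?_, fun x y z => ?_⟩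
  · have key := hclosed (Ham x) (Ham y) (Ham z)
    rw [hcomm, hcomm, hcomm] at key
    simp only [hb] at key
    rw [hflip z y, hflip y x] at key
    simp only [map_neg] at key
    simp only [hb]
    rw [hflip ((Ham x).1 y) z, hflip ((Ham y).1 z) x, hflip ((Ham z).1 x) y]
    linear_combination (norm := abel) key
  · rw [hb, hb, hb, (Ham x).2]
end
end

section
/- Let A be a unital associative complex $*$-algebra with trivial center Z(A) = ℂ1, in which every derivation is inner, and let ω ∈ Ω̲²_Der(A) be defined by ω(ad(ix), ad(iy)) = i[x,y]. Then ω is well-defined, closed, and nondegenerate, with Ham(x) = ad(ix) and associated Poisson bracket {x,y} = i[x,y]. -/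
noncomputable section

/-- The inner derivation ad(a) : b ↦ ab - ba. -/
def adDer {A : Type} [Ring A] [Algebra ℂ A] (a : A) : DerA A :=
  ⟨LinearMap.mulLeft ℂ a - LinearMap.mulRight ℂ a, by
    intro b c
    simp only [LinearMap.sub_apply, LinearMap.mulLeft_apply, LinearMap.mulRight_apply,
      mul_sub, sub_mul, mul_assoc]
    abel⟩

lemma smul_combo6 {A : Type} [Ring A] [Algebra ℂ A] (r : ℂ) (e1 e2 e3 e4 e5 e6 : A)
    (h : e1 - e2 + e3 - e4 + e5 - e6 = 0) :
    r • e1 - r • e2 + r • e3 - r • e4 + r • e5 - r • e6 = 0 := by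
  rw [← smul_sub, ← smul_add, ← smul_sub, ← smul_add, ← smul_sub, h, smul_zero]

/-- for a unital complex *-algebra A with trivial center ℂ1 and only
inner derivations, ω(ad(ix), ad(iy)) = i[x,y] gives a well-defined, antisymmetric,
closed and nondegenerate element of Ω̲²_Der(A), with Ham(x) = ad(ix) and Poisson
bracket {x,y} = i[x,y]. -/
theorem stmt_17 (A : Type) [Ring A] [Algebra ℂ A] [StarRing A] [StarModule ℂ A]
    (hcenter : Set.center A = Set.range (algebraMap ℂ A))
    (hinner : ∀ X : DerA A, ∃ a : A, ∀ b : A, X.1 b = a * b - b * a) :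
    ∃ ω : DerA A → DerA A → A,
      (∀ x y : A,
        ω (adDer (Complex.I • x)) (adDer (Complex.I • y)) = Complex.I • (x * y - y * x)) ∧
      (∀ X Y : DerA A, ω X Y = - ω Y X) ∧
      (∀ X Y Z : DerA A,
        X.1 (ω Y Z) - Y.1 (ω X Z) + Z.1 (ω X Y)
          - ω (derComm X Y) Z + ω (derComm X Z) Y - ω (derComm Y Z) X = 0) ∧
      (∀ (x : A) (X : DerA A), ω X (adDer (Complex.I • x)) = X.1 x) := by
  classical
  -- derivations kill 1
  have done1 : ∀ X : DerA A, X.1 1 = 0 := by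
    intro X
    have h := X.2 1 1
    simp only [mul_one, one_mul] at h
    have h2 : X.1 1 - X.1 1 = X.1 1 + X.1 1 - X.1 1 := by rw [← h]
    simpa using h2.symm
  -- derivations agree on elements differing by a central element
  have key : ∀ (X : DerA A) (u v : A), (∀ c : A, u * c - c * u = v * c - c * v) →
      X.1 u = X.1 v := by
    intro X u v h
    have hc : u - v ∈ Set.center A := by
      rw [Semigroup.mem_center_iff]
      intro g
      have hg := h g
      have : u * g - g * u - (v * g - g * v) = 0 := by rw [hg]; abel
      have h2 : (u - v) * g - g * (u - v) = 0 := by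
        rw [sub_mul, mul_sub]
        calc u * g - v * g - (g * u - g * v)
            = u * g - g * u - (v * g - g * v) := by abel
          _ = 0 := this
      exact (sub_eq_zero.mp h2).symm
    rw [hcenter] at hc
    obtain ⟨z, hz⟩ := hc
    have : X.1 (u - v) = 0 := by
      rw [← hz, Algebra.algebraMap_eq_smul_one, map_smul, done1, smul_zero]
    rw [map_sub] at this
    exact sub_eq_zero.mp this
  -- the choice function
  set f : DerA A → A := fun Y => Classical.choose (hinner Y) with hf
  have hfspec : ∀ (Y : DerA A) (c : A), Y.1 c = f Y * c - c * f Y := fun Y =>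
    Classical.choose_spec (hinner Y)
  -- for Y = adDer a, any derivation sends f Y and a to the same value
  have hfad : ∀ (X : DerA A) (a : A), X.1 (f (adDer a)) = X.1 a := by
    intro X a
    apply key
    intro c
    have := (hfspec (adDer a) c).symm
    simpa [adDer] using this
  refine ⟨fun X Y => (-Complex.I) • X.1 (f Y), ?_, ?_, ?_, ?_⟩
  · intro x y
    simp only []
    rw [hfad]
    have : (adDer (Complex.I • x)).1 (Complex.I • y)
        = Complex.I • ((Complex.I • x) * y - y * (Complex.I • x)) := by
      simp [adDer, smul_sub]
    rw [this]
    simp only [smul_mul_assoc, mul_smul_comm, smul_sub, smul_smul]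
    rw [show (-Complex.I) * (Complex.I * Complex.I) = Complex.I by
      simp [Complex.I_mul_I]]
  · intro X Y
    simp only []
    rw [hfspec X (f Y), hfspec Y (f X)]
    rw [show f Y * f X - f X * f Y = -(f X * f Y - f Y * f X) from by abel,
      smul_neg, neg_neg]
  · intro X Y Z
    simp only [map_smul]
    apply smul_combo6
    simp only [derComm, LinearMap.sub_apply, LinearMap.comp_apply]
    simp only [hfspec]
    noncomm_ring
  · intro x X
    simp only []
    rw [hfad, map_smul, smul_smul]
    simp [Complex.I_mul_I]
end
end

section
/- Let A be a unital associative complex algebra and M a left A-module possessing a dual basis, i.e., M is a direct summand of a free module A ⊗ E with projection P : A ⊗ E → M. Then ∇ = P ∘ (d ⊗ id_E) defines an Ω-connection on M for any differential calculus Ω over A; in particular every projective left A-module admits an Ω-connection. -/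
open TensorProduct MulOpposite

noncomputable section

/-- The balancing relations defining Ω ⊗_A M as a quotient of Ω ⊗_ℂ M:
the span of the elements (ω·b) ⊗ m - ω ⊗ (b·m). -/
def relSub (A Ω M : Type) [Ring A] [Algebra ℂ A]
    [AddCommGroup Ω] [Module ℂ Ω] [Module Aᵐᵒᵖ Ω]
    [AddCommGroup M] [Module ℂ M] [Module A M] : Submodule ℂ (Ω ⊗[ℂ] M) :=
  Submodule.span ℂ {t : Ω ⊗[ℂ] M | ∃ (ω : Ω) (b : A) (n : M),
    t = (op b • ω) ⊗ₜ[ℂ] n - ω ⊗ₜ[ℂ] (b • n)}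

/-- if the left A-module M is a direct summand of a free module A ⊗ E
with projection P, then nabla = P ∘ (d ⊗ id_E) defines an Ω-connection on M (the Leibniz
rule holds in Ω¹ ⊗_A M, i.e. modulo the balancing relations); in particular every
projective left A-module admits an Ω-connection. -/
theorem stmt_18 (A : Type) [Ring A] [Algebra ℂ A]
    (Ω : Type) [AddCommGroup Ω] [Module ℂ Ω] [Module A Ω] [Module Aᵐᵒᵖ Ω]
    [SMulCommClass A Aᵐᵒᵖ Ω] [SMulCommClass ℂ A Ω] [IsScalarTower ℂ A Ω]
    (d : A →ₗ[ℂ] Ω)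
    (hd : ∀ a b : A, d (a * b) = op b • d a + a • d b)
    (M : Type) [AddCommGroup M] [Module ℂ M] [Module A M]
    [SMulCommClass ℂ A M] [IsScalarTower ℂ A M]
    (E : Type) [AddCommGroup E] [Module ℂ E]
    (incl : M →ₗ[A] A ⊗[ℂ] E) (P : (A ⊗[ℂ] E) →ₗ[A] M)
    (hPI : ∀ m : M, P (incl m) = m) :
    let nabla : M →ₗ[ℂ] Ω ⊗[ℂ] M :=
      (TensorProduct.map (LinearMap.id : Ω →ₗ[ℂ] Ω)
          ((P.restrictScalars ℂ) ∘ₗ (TensorProduct.mk ℂ A E 1))) ∘ₗ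
        (TensorProduct.map d (LinearMap.id : E →ₗ[ℂ] E)) ∘ₗ
        (incl.restrictScalars ℂ)
    ∀ (a : A) (m : M), nabla (a • m) - (a • nabla m + d a ⊗ₜ[ℂ] m) ∈ relSub A Ω M := by
  intro nabla a m
  set Φ : A ⊗[ℂ] E →ₗ[ℂ] Ω ⊗[ℂ] M :=
    (TensorProduct.map (LinearMap.id : Ω →ₗ[ℂ] Ω)
        ((P.restrictScalars ℂ) ∘ₗ (TensorProduct.mk ℂ A E 1))) ∘ₗ
      (TensorProduct.map d (LinearMap.id : E →ₗ[ℂ] E)) with hΦ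
  have key : ∀ t : A ⊗[ℂ] E,
      Φ (a • t) - (a • Φ t + d a ⊗ₜ[ℂ] P t) ∈ relSub A Ω M := by
    intro t
    induction t using TensorProduct.induction_on with
    | zero =>
        simp only [smul_zero, map_zero, TensorProduct.tmul_zero, add_zero, sub_zero,
          sub_self]
        exact Submodule.zero_mem _
    | tmul b e =>
        have hsm : a • (b ⊗ₜ[ℂ] e) = (a * b) ⊗ₜ[ℂ] e := by
          rw [TensorProduct.smul_tmul', smul_eq_mul]
        have hP : P (b ⊗ₜ[ℂ] e) = b • P ((1 : A) ⊗ₜ[ℂ] e) := by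
          rw [← P.map_smul, TensorProduct.smul_tmul', smul_eq_mul, mul_one]
        rw [hsm]
        simp only [hΦ, LinearMap.comp_apply, TensorProduct.map_tmul, LinearMap.id_coe, id_eq,
          LinearMap.restrictScalars_apply, TensorProduct.mk_apply]
        rw [hd, hP, TensorProduct.add_tmul, TensorProduct.smul_tmul']
        have : (op b • d a) ⊗ₜ[ℂ] P ((1:A) ⊗ₜ[ℂ] e) + (a • d b) ⊗ₜ[ℂ] P ((1:A) ⊗ₜ[ℂ] e) -
            ((a • d b) ⊗ₜ[ℂ] P ((1:A) ⊗ₜ[ℂ] e) + d a ⊗ₜ[ℂ] (b • P ((1:A) ⊗ₜ[ℂ] e)))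
            = (op b • d a) ⊗ₜ[ℂ] P ((1:A) ⊗ₜ[ℂ] e) - d a ⊗ₜ[ℂ] (b • P ((1:A) ⊗ₜ[ℂ] e)) := by
          abel
        rw [this]
        exact Submodule.subset_span ⟨d a, b, P ((1:A) ⊗ₜ[ℂ] e), rfl⟩
    | add x y hx hy =>
        have : Φ (a • (x + y)) - (a • Φ (x + y) + d a ⊗ₜ[ℂ] P (x + y))
            = (Φ (a • x) - (a • Φ x + d a ⊗ₜ[ℂ] P x))
              + (Φ (a • y) - (a • Φ y + d a ⊗ₜ[ℂ] P y)) := by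
          rw [smul_add, map_add, map_add, map_add, smul_add, TensorProduct.tmul_add]
          abel
        rw [this]
        exact Submodule.add_mem _ hx hy
  have h := key (incl m)
  have hn : nabla (a • m) = Φ (a • incl m) := by
    simp only [nabla, LinearMap.comp_apply, LinearMap.restrictScalars_apply, incl.map_smul, hΦ]
  have hn2 : nabla m = Φ (incl m) := rfl
  rw [hn, hn2, hPI m] at *
  exact h
end
end
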